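/- arXiv:2108.12854 — 4 statements merged into one kernel-verified Lean document; each statement's English description precedes it below -/
import Mathlib

section
/- There exist no matrices A, B ∈ ℂ^{2×2} such that A σ_1 B^* = A σ_3 B^* = A B^* = 0 and B^* A ≠ 0. Equivalently, Rigidity Assumption (iv) cannot be satisfied in dimension n = 1. -/
open Matrix

def σ₁ : Matrix (Fin 2) (Fin 2) ℂ := !![0, 1; 1, 0]
def σ₃ : Matrix (Fin 2) (Fin 2) ℂ := !![1, 0; 0, -1]

theorem no_RAiv_dim1 :
    ¬ ∃ A B : Matrix (Fin 2) (Fin 2) ℂ,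
      A * σ₁ * Bᴴ = 0 ∧ A * σ₃ * Bᴴ = 0 ∧ A * Bᴴ = 0 ∧ Bᴴ * A ≠ 0 := by
  rintro ⟨A, B, h1, h2, h3, h4⟩
  apply h4
  set M := Bᴴ with hM
  -- scalar consequences
  have E : ∀ p q : Fin 2, A p 0 * M 1 q + A p 1 * M 0 q = 0 := by
    intro p q
    have := congrFun (congrFun h1 p) q
    simp [σ₁, Matrix.mul_apply, Fin.sum_univ_two] at this
    linear_combination this
  have H2 : ∀ p q : Fin 2, A p 0 * M 0 q - A p 1 * M 1 q = 0 := by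
    intro p q
    have := congrFun (congrFun h2 p) q
    simp [σ₃, Matrix.mul_apply, Fin.sum_univ_two] at this
    linear_combination this
  have H3 : ∀ p q : Fin 2, A p 0 * M 0 q + A p 1 * M 1 q = 0 := by
    intro p q
    have := congrFun (congrFun h3 p) q
    simp [Matrix.mul_apply, Fin.sum_univ_two] at this
    linear_combination this
  have F1 : ∀ p q : Fin 2, A p 0 * M 0 q = 0 := by
    intro p q
    linear_combination (H3 p q + H2 p q) / 2
  have F2 : ∀ p q : Fin 2, A p 1 * M 1 q = 0 := by
    intro p q
    linear_combination (H3 p q - H2 p q) / 2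
  ext i j
  simp only [Matrix.mul_apply, Fin.sum_univ_two, Matrix.zero_apply]
  fin_cases i <;> fin_cases j <;> simp only [Fin.mk_zero, Fin.mk_one, Fin.isValue]
  · -- (0,0): M 0 0 * A 0 0 + M 0 1 * A 1 0
    linear_combination F1 0 0 + F1 1 1
  · -- (0,1): square is zero
    have hx : (M 0 0 * A 0 1 + M 0 1 * A 1 1) * (M 0 0 * A 0 1 + M 0 1 * A 1 1) = 0 := by
      linear_combination (A 0 1 * M 0 0) * E 0 0 + (2 * M 0 0 * A 1 1) * E 0 1 +
        (A 1 1 * M 0 1) * E 1 1 - (A 0 1 * M 1 0 + 2 * A 1 1 * M 1 1) * F1 0 0 -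
        (A 1 0 * M 0 1) * F2 1 1
    exact mul_self_eq_zero.mp hx
  · -- (1,0)
    have hy : (M 1 0 * A 0 0 + M 1 1 * A 1 0) * (M 1 0 * A 0 0 + M 1 1 * A 1 0) = 0 := by
      linear_combination (A 0 0 * M 1 0 + 2 * A 1 0 * M 1 1) * E 0 0 +
        (A 1 0 * M 1 1) * E 1 1 - (A 0 1 * M 1 0) * F1 0 0 -
        (2 * A 0 1 * M 1 1) * F1 1 0 - (A 1 0 * M 0 1) * F2 1 1
    exact mul_self_eq_zero.mp hy
  · -- (1,1)
    linear_combination F2 0 0 + F2 1 1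
end

section
/- For every z ∈ ℂ and m ∈ ℝ, dist(z² - m², [0,∞)) = 2|Re z||Im z| if (Re z)² - (Im z)² ≥ m², and dist(z² - m², [0,∞)) = |z² - m²| if (Re z)² - (Im z)² ≤ m². -/
open Metric Complex

lemma halfline_nonempty : ({w : ℂ | ∃ x : ℝ, 0 ≤ x ∧ w = (x : ℂ)}).Nonempty :=
  ⟨0, 0, le_refl 0, by simp⟩

lemma le_infDist_halfline (w : ℂ) (d : ℝ)
    (h : ∀ x : ℝ, 0 ≤ x → d ≤ dist w (x : ℂ)) :
    d ≤ Metric.infDist w {w : ℂ | ∃ x : ℝ, 0 ≤ x ∧ w = (x : ℂ)} := by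
  by_contra hlt
  push_neg at hlt
  obtain ⟨y, ⟨x, hx, rfl⟩, hy⟩ := (Metric.infDist_lt_iff halfline_nonempty).mp hlt
  exact absurd (h x hx) (not_le.mpr hy)

lemma infDist_halfline_of_re_nonneg (w : ℂ) (h : 0 ≤ w.re) :
    Metric.infDist w {w : ℂ | ∃ x : ℝ, 0 ≤ x ∧ w = (x : ℂ)} = |w.im| := by
  apply le_antisymm
  · have hmem : ((w.re : ℂ)) ∈ {w : ℂ | ∃ x : ℝ, 0 ≤ x ∧ w = (x : ℂ)} := ⟨w.re, h, rfl⟩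
    have h2 := Metric.infDist_le_dist_of_mem (x := w) hmem
    have hd : dist w ((w.re : ℂ)) = |w.im| := by
      rw [Complex.dist_eq]
      have he : w - (w.re : ℂ) = (w.im : ℂ) * Complex.I := by
        apply Complex.ext <;> simp
      rw [he]
      simp
    rwa [hd] at h2
  · apply le_infDist_halfline
    intro x hx
    have h1 : |(w - (x : ℂ)).im| ≤ ‖w - (x : ℂ)‖ := Complex.abs_im_le_norm _
    simpa [Complex.dist_eq] using h1

lemma infDist_halfline_of_re_nonpos (w : ℂ) (h : w.re ≤ 0) :
    Metric.infDist w {w : ℂ | ∃ x : ℝ, 0 ≤ x ∧ w = (x : ℂ)} = ‖w‖ := by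
  apply le_antisymm
  · have hmem : ((0 : ℝ) : ℂ) ∈ {w : ℂ | ∃ x : ℝ, 0 ≤ x ∧ w = (x : ℂ)} :=
      ⟨0, le_refl 0, rfl⟩
    have h2 := Metric.infDist_le_dist_of_mem (x := w) hmem
    simpa [Complex.dist_eq] using h2
  · apply le_infDist_halfline
    intro x hx
    rw [Complex.dist_eq]
    have h1 : ‖w‖ ^ 2 ≤ ‖w - (x : ℂ)‖ ^ 2 := by
      rw [Complex.sq_norm, Complex.sq_norm, Complex.normSq_apply, Complex.normSq_apply]
      simp only [Complex.sub_re, Complex.sub_im, Complex.ofReal_re, Complex.ofReal_im,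
        sub_zero]
      nlinarith
    exact le_of_pow_le_pow_left₀ two_ne_zero (norm_nonneg _) h1

theorem dist_sq_to_halfline (z : ℂ) (m : ℝ) :
    (z.re ^ 2 - z.im ^ 2 ≥ m ^ 2 →
      Metric.infDist (z ^ 2 - (m : ℂ) ^ 2) {w : ℂ | ∃ x : ℝ, 0 ≤ x ∧ w = (x : ℂ)} =
        2 * |z.re| * |z.im|) ∧
    (z.re ^ 2 - z.im ^ 2 ≤ m ^ 2 →
      Metric.infDist (z ^ 2 - (m : ℂ) ^ 2) {w : ℂ | ∃ x : ℝ, 0 ≤ x ∧ w = (x : ℂ)} =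
        ‖z ^ 2 - (m : ℂ) ^ 2‖) := by
  have hre : (z ^ 2 - (m : ℂ) ^ 2).re = z.re ^ 2 - z.im ^ 2 - m ^ 2 := by
    simp [pow_two, Complex.mul_re]
  have him : (z ^ 2 - (m : ℂ) ^ 2).im = 2 * z.re * z.im := by
    simp [pow_two, Complex.mul_im]; ring
  constructor
  · intro h
    rw [infDist_halfline_of_re_nonneg _ (by rw [hre]; linarith), him]
    rw [abs_mul, abs_mul]
    norm_num
  · intro h
    exact infDist_halfline_of_re_nonpos _ (by rw [hre]; linarith)
end

section
/- In dimension n = 4, with Dirac matrices α_1 = σ_1 ⊗ I_2, α_2 = σ_2 ⊗ σ_1, α_3 = σ_2 ⊗ σ_2, α_4 = σ_2 ⊗ σ_3, α_5 = σ_3 ⊗ I_2 ∈ ℂ^{4×4}, there exist no 4×4 complex matrices A, B with A α_k B^* = 0 for k ∈ {1,2,3,4}, A B^* = 0, and A α_5 B^* ≠ 0. -/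
open Matrix Kronecker

def σ₂ : Matrix (Fin 2) (Fin 2) ℂ := !![0, -Complex.I; Complex.I, 0]
theorem no_RAii_dim4 :
    let α₁ := σ₁ ⊗ₖ (1 : Matrix (Fin 2) (Fin 2) ℂ)
    let α₂ := σ₂ ⊗ₖ σ₁
    let α₃ := σ₂ ⊗ₖ σ₂
    let α₄ := σ₂ ⊗ₖ σ₃
    let α₅ := σ₃ ⊗ₖ (1 : Matrix (Fin 2) (Fin 2) ℂ)
    ¬ ∃ A B : Matrix (Fin 2 × Fin 2) (Fin 2 × Fin 2) ℂ,
      A * α₁ * Bᴴ = 0 ∧ A * α₂ * Bᴴ = 0 ∧ A * α₃ * Bᴴ = 0 ∧ A * α₄ * Bᴴ = 0 ∧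
      A * Bᴴ = 0 ∧ A * α₅ * Bᴴ ≠ 0 := by
  intro α₁ α₂ α₃ α₄ α₅
  rintro ⟨A, B, h1, h2, h3, h4, h0, h5⟩
  apply h5
  ext i j
  have e0 := congrFun (congrFun h0 i) j
  have e1 := congrFun (congrFun h1 i) j
  have e2 := congrFun (congrFun h2 i) j
  have e3 := congrFun (congrFun h3 i) j
  have e4 := congrFun (congrFun h4 i) j
  have hα₁ : α₁ = σ₁ ⊗ₖ (1 : Matrix (Fin 2) (Fin 2) ℂ) := rfl
  have hα₂ : α₂ = σ₂ ⊗ₖ σ₁ := rfl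
  have hα₃ : α₃ = σ₂ ⊗ₖ σ₂ := rfl
  have hα₄ : α₄ = σ₂ ⊗ₖ σ₃ := rfl
  have hα₅ : α₅ = σ₃ ⊗ₖ (1 : Matrix (Fin 2) (Fin 2) ℂ) := rfl
  set u₀ := A i (0, 0) with hu0
  set u₁ := A i (0, 1) with hu1
  set u₂ := A i (1, 0) with hu2
  set u₃ := A i (1, 1) with hu3
  set v₀ := Bᴴ (0, 0) j with hv0
  set v₁ := Bᴴ (0, 1) j with hv1
  set v₂ := Bᴴ (1, 0) j with hv2
  set v₃ := Bᴴ (1, 1) j with hv3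
  simp only [hα₁, hα₂, hα₃, hα₄, hα₅, σ₁, σ₂, σ₃, Matrix.mul_apply, Matrix.zero_apply,
    Fintype.sum_prod_type, Fin.sum_univ_two, Matrix.kroneckerMap_apply, Matrix.one_apply,
    Matrix.cons_val', Matrix.cons_val_zero, Matrix.cons_val_one, Matrix.head_cons,
    Matrix.empty_val', Matrix.cons_val_fin_one, Matrix.head_fin_const, Matrix.of_apply, reduceIte, one_ne_zero, zero_ne_one,
    ← hu0, ← hu1, ← hu2, ← hu3, ← hv0, ← hv1, ← hv2, ← hv3] at e0 e1 e2 e3 e4 ⊢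
  have E0 : u₀*v₀ + u₁*v₁ + u₂*v₂ + u₃*v₃ = 0 := by linear_combination e0
  have E1 : u₀*v₂ + u₁*v₃ + u₂*v₀ + u₃*v₁ = 0 := by linear_combination e1
  have E2 : u₀*v₃ + u₁*v₂ - u₂*v₁ - u₃*v₀ = 0 := by
    linear_combination Complex.I * e2 + (u₀*v₃ + u₁*v₂ - u₂*v₁ - u₃*v₀) * Complex.I_sq
  have E3 : -(u₀*v₃) + u₁*v₂ + u₂*v₁ - u₃*v₀ = 0 := by
    linear_combination e3 + (-(u₀*v₃) + u₁*v₂ + u₂*v₁ - u₃*v₀) * Complex.I_sq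
  have E4 : u₀*v₂ - u₁*v₃ - u₂*v₀ + u₃*v₁ = 0 := by
    linear_combination Complex.I * e4 + (u₀*v₂ - u₁*v₃ - u₂*v₀ + u₃*v₁) * Complex.I_sq
  have Qsq : (u₀*v₀ + u₁*v₁ - u₂*v₂ - u₃*v₃)^2 = 0 := by
    linear_combination (u₀*v₀ + u₁*v₁ + u₂*v₂ + u₃*v₃) * E0
      + (-2*(u₀*v₂ + u₁*v₃)) * E1 + (2*(u₀*v₃ + u₁*v₂)) * E2
      + (2*(u₀*v₃ - u₁*v₂)) * E3 + (2*(u₀*v₂ - u₁*v₃)) * E4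
  have Q : u₀*v₀ + u₁*v₁ - u₂*v₂ - u₃*v₃ = 0 := by
    exact pow_eq_zero_iff (n := 2) (by norm_num) |>.mp Qsq
  linear_combination Q
end

section
/- Let a = (a_1,a_2,a_3,a_4), b = (b_1,b_2,b_3,b_4) ∈ ℂ⁴ satisfy a_3 b̄_1 + a_2 b̄_4 = 0, a_3 b̄_2 - a_1 b̄_4 = 0, a_4 b̄_1 - a_2 b̄_3 = 0, a_4 b̄_2 + a_1 b̄_3 = 0, and a_1 b̄_1 + a_2 b̄_2 + a_3 b̄_3 + a_4 b̄_4 = 0. Then a_1 b̄_1 + a_2 b̄_2 - a_3 b̄_3 - a_4 b̄_4 = 0. -/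
theorem RAii_dim4_algebraic_core (a b : Fin 4 → ℂ)
    (h1 : a 2 * starRingEnd ℂ (b 0) + a 1 * starRingEnd ℂ (b 3) = 0)
    (h2 : a 2 * starRingEnd ℂ (b 1) - a 0 * starRingEnd ℂ (b 3) = 0)
    (h3 : a 3 * starRingEnd ℂ (b 0) - a 1 * starRingEnd ℂ (b 2) = 0)
    (h4 : a 3 * starRingEnd ℂ (b 1) + a 0 * starRingEnd ℂ (b 2) = 0)
    (h5 : a 0 * starRingEnd ℂ (b 0) + a 1 * starRingEnd ℂ (b 1) +
          a 2 * starRingEnd ℂ (b 2) + a 3 * starRingEnd ℂ (b 3) = 0) :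
    a 0 * starRingEnd ℂ (b 0) + a 1 * starRingEnd ℂ (b 1) -
      a 2 * starRingEnd ℂ (b 2) - a 3 * starRingEnd ℂ (b 3) = 0 := by
  set y : Fin 4 → ℂ := fun i => starRingEnd ℂ (b i) with hy
  set P : ℂ := a 0 * y 0 + a 1 * y 1 with hPdef
  set Q : ℂ := a 2 * y 2 + a 3 * y 3 with hQdef
  have hy0Q : y 0 * Q = 0 := by linear_combination y 2 * h1 + y 3 * h3
  have hy1Q : y 1 * Q = 0 := by linear_combination y 2 * h2 + y 3 * h4
  have hPQ : P * Q = 0 := by linear_combination a 0 * hy0Q + a 1 * hy1Q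
  have hPP : P * P = 0 := by linear_combination P * h5 - hPQ
  have hP : P = 0 := by
    rcases mul_eq_zero.mp hPP with h | h <;> exact h
  linear_combination 2 * hP - h5
end
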